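/- arXiv:2108.08609 — 2 statements merged into one kernel-verified Lean document; each statement's English description precedes it below -/
import Mathlib

section
/- Let G be a non-bipartite graph whose smallest induced odd cycle has length 2n+1. Then I(G)^{(s)} = I(G)^s for all s ≤ n, where I(G)^{(s)} denotes the s-th symbolic power of the edge ideal. -/
open MvPolynomial

noncomputable section

/-- The integral closure of an ideal `I`: an element `r` belongs to it iff `r·t` is
integral over the Rees algebra `R[It]` inside `R[t]`; equivalently, `r` satisfies an
equation `r^n + a₁ r^{n-1} + ⋯ + aₙ = 0` with `aᵢ ∈ Iⁱ`. -/
def Ideal.intCl {R : Type*} [CommRing R] (I : Ideal R) : Ideal R where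
  carrier := {r | (Polynomial.C r * Polynomial.X : Polynomial R) ∈
      integralClosure (reesAlgebra I) (Polynomial R)}
  zero_mem' := by
    simp only [Set.mem_setOf_eq, map_zero, zero_mul]
    exact Subalgebra.zero_mem _
  add_mem' := by
    intro a b ha hb
    simp only [Set.mem_setOf_eq, map_add, add_mul] at ha hb ⊢
    exact Subalgebra.add_mem _ ha hb
  smul_mem' := by
    intro c x hx
    simp only [Set.mem_setOf_eq] at hx ⊢
    have hmem : (Polynomial.C c : Polynomial R) ∈ reesAlgebra I := by
      rw [← Polynomial.algebraMap_eq]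
      exact Subalgebra.algebraMap_mem _ c
    have hc : (Polynomial.C c : Polynomial R) ∈
        integralClosure (reesAlgebra I) (Polynomial R) := by
      simpa using Subalgebra.algebraMap_mem
        (integralClosure (reesAlgebra I) (Polynomial R)) (⟨Polynomial.C c, hmem⟩ : reesAlgebra I)
    have heq : Polynomial.C (c • x) * Polynomial.X
        = Polynomial.C c * (Polynomial.C x * Polynomial.X) := by
      rw [smul_eq_mul, Polynomial.C_mul, mul_assoc]
    rw [heq]
    exact mul_mem hc hx

/-- The `s`-th symbolic power of an ideal, as the intersection of the `s`-th powers of its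
minimal primes (the appropriate definition for radical, e.g. squarefree monomial, ideals). -/
def Ideal.symbPow {R : Type*} [CommRing R] (I : Ideal R) (s : ℕ) : Ideal R :=
  ⨅ p ∈ I.minimalPrimes, p ^ s

section Koszul

variable (k : Type*) [Field k] (σ : Type*) [Fintype σ] [LinearOrder σ]

/-- The Koszul differential (on the Koszul complex of the variables, with coefficients in
the polynomial ring). -/
def koszulD : ∀ i : ℕ,
    (({s : Finset σ // s.card = i} → MvPolynomial σ k) →ₗ[k]
      ({s : Finset σ // s.card = i - 1} → MvPolynomial σ k))
  | 0 => 0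
  | (i + 1) =>
    LinearMap.pi fun t : {s : Finset σ // s.card = i} =>
      ∑ x ∈ (t.1ᶜ).attach,
        ((-1 : k) ^ ((t.1.filter (fun a => a < x.1)).card)) •
          ((LinearMap.mulLeft k (X x.1 : MvPolynomial σ k)).comp
            (LinearMap.proj (⟨insert x.1 t.1, by
              rw [Finset.card_insert_of_notMem (Finset.mem_compl.mp x.2), t.2]⟩ :
                {s : Finset σ // s.card = i + 1})))

variable {k σ}

/-- The degree `j` strand of homological degree `i` of the Koszul complex with coefficients
in the ideal `I`. -/
def koszulStrand (I : Ideal (MvPolynomial σ k)) (i j : ℕ) :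
    Submodule k ({s : Finset σ // s.card = i} → MvPolynomial σ k) :=
  if i ≤ j then
    Submodule.pi Set.univ fun _ =>
      (Submodule.restrictScalars k (I : Submodule (MvPolynomial σ k) (MvPolynomial σ k))) ⊓
        homogeneousSubmodule σ k (j - i)
  else ⊥

/-- The degree `j` cycles in homological degree `i` of the Koszul complex with values in `I`. -/
def koszulCycles (I : Ideal (MvPolynomial σ k)) (i j : ℕ) :
    Submodule k ({s : Finset σ // s.card = i} → MvPolynomial σ k) :=
  koszulStrand I i j ⊓ LinearMap.ker (koszulD k σ i)

/-- The graded Betti number `β_{i,j}(I) = dim_k (Tor_i(I,k))_j`, computed via the Koszul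
complex. -/
def gradedBetti (I : Ideal (MvPolynomial σ k)) (i j : ℕ) : Cardinal :=
  Module.rank k
    ((↥(koszulCycles I i j)) ⧸
      (Submodule.comap (koszulCycles I i j).subtype
        (Submodule.map (koszulD k σ (i + 1)) (koszulStrand I (i + 1) j))))

/-- The Castelnuovo–Mumford regularity of an ideal: `max { j - i : β_{i,j}(I) ≠ 0 }`. -/
def reg (I : Ideal (MvPolynomial σ k)) : ℤ :=
  sSup {d : ℤ | ∃ i j : ℕ, gradedBetti I i j ≠ 0 ∧ d = (j : ℤ) - (i : ℤ)}

end Koszul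

section Graphs

variable (k : Type*) [Field k] {V : Type*}

/-- The edge ideal of a graph. -/
def edgeIdeal (G : SimpleGraph V) : Ideal (MvPolynomial V k) :=
  Ideal.span {p | ∃ u v, G.Adj u v ∧ p = X u * X v}

/-- The edge ideal of the induced subgraph of `G` on a set `S` of vertices. -/
def edgeIdealOn (G : SimpleGraph V) (S : Set V) : Ideal (MvPolynomial V k) :=
  Ideal.span {p | ∃ u v, G.Adj u v ∧ u ∈ S ∧ v ∈ S ∧ p = X u * X v}

variable {k}

/-- A cycle of length `m` in `G`, given by an injective map from `ZMod m` whose consecutive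
values are adjacent. -/
def IsCycleMap (G : SimpleGraph V) (m : ℕ) (c : ZMod m → V) : Prop :=
  Function.Injective c ∧ ∀ i, G.Adj (c i) (c (i + 1))

/-- An induced cycle: a cycle with no chords. -/
def IsInducedCycleMap (G : SimpleGraph V) (m : ℕ) (c : ZMod m → V) : Prop :=
  IsCycleMap G m c ∧ ∀ i j : ZMod m, G.Adj (c i) (c j) → j = i + 1 ∨ i = j + 1

/-- A bow in `G`: two (odd) cycles which are vertex-disjoint and at distance at least two
(no edge between them). -/
def IsBow (G : SimpleGraph V) {p q : ℕ} (c₁ : ZMod p → V) (c₂ : ZMod q → V) : Prop :=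
  IsCycleMap G p c₁ ∧ IsCycleMap G q c₂ ∧ (∀ i j, c₁ i ≠ c₂ j) ∧
    ∀ i j, ¬ G.Adj (c₁ i) (c₂ j)

/-- The induced matching number of the induced subgraph of `G` on the vertex set `S`. -/
def inducedMatchingNumber (G : SimpleGraph V) (S : Set V) : ℕ :=
  sSup {r | ∃ M : Finset (V × V), M.card = r ∧
    (∀ e ∈ M, e.1 ∈ S ∧ e.2 ∈ S ∧ G.Adj e.1 e.2) ∧
    ∀ e ∈ M, ∀ f ∈ M, e ≠ f →
      ∀ u ∈ ({e.1, e.2} : Set V), ∀ w ∈ ({f.1, f.2} : Set V), u ≠ w ∧ ¬ G.Adj u w}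

/-- The vertex cover number of a graph. -/
def coverNumber [Fintype V] (G : SimpleGraph V) : ℕ :=
  sInf {r | ∃ C : Finset V, C.card = r ∧ ∀ u v, G.Adj u v → u ∈ C ∨ v ∈ C}

/-- The parallelization `G^v` of a graph `G`: the vertex `i` is deleted when `v i = 0` and
duplicated `v i - 1` times when `v i ≥ 1`. -/
def parallelization (G : SimpleGraph V) (v : V → ℕ) : SimpleGraph ((i : V) × Fin (v i)) where
  Adj a b := G.Adj a.1 b.1
  symm := ⟨fun _ _ h => h.symm⟩
  loopless := ⟨fun a h => G.loopless.irrefl a.1 h⟩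

end Graphs

/-!
For a vertex cover `C` of `G`, the ideal `P_C` generated by the variables of `C` is a prime
containing `I(G)`, hence contains a minimal prime of `I(G)`. So a polynomial in `I(G)^{(s)}` lies
in every `P_C^s`: each of its monomials `x^b` has at least `s` variables (with multiplicity) in
every vertex cover, i.e. every vertex cover of the parallelization `G^b` has at least `s`
vertices. Odd closed walks of `G^b` project to odd closed walks of `G`, which contain induced odd
cycles, so they have length at least `2n + 1 ≥ 2s + 1`. For graphs all of whose odd cycles are
longer than `2ν + 1`, `ν` the matching number, König's theorem `τ = ν` still holds; hence `G^b`
has a matching with `s` edges, which projects to `s` edges of `G` whose product divides `x^b`.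
-/

open Finset

namespace Ideal

variable {R : Type*} [CommRing R]

theorem pow_le_symbPow (I : Ideal R) (s : ℕ) : I ^ s ≤ I.symbPow s :=
  le_iInf₂ fun _ hp => Ideal.pow_right_mono hp.1.2 s

theorem symbPow_le_pow_of_le {I J : Ideal R} [J.IsPrime] (hIJ : I ≤ J) (s : ℕ) :
    I.symbPow s ≤ J ^ s := by
  obtain ⟨p, hp, hpJ⟩ := Ideal.exists_minimalPrimes_le hIJ
  exact (iInf₂_le p hp).trans (Ideal.pow_right_mono hpJ s)

end Ideal

namespace MvPolynomial

variable {R σ : Type*}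

theorem isPrime_span_X_image [CommRing R] [IsDomain R] (t : Set σ) :
    (Ideal.span (X '' t : Set (MvPolynomial σ R))).IsPrime := by
  classical
  set P := Ideal.span (X '' t : Set (MvPolynomial σ R))
  let kill : MvPolynomial σ R →ₐ[R] MvPolynomial σ R :=
    aeval fun i => if i ∈ t then 0 else X i
  have hmk : (Ideal.Quotient.mkₐ R P).comp kill = Ideal.Quotient.mkₐ R P := by
    refine algHom_ext fun i => ?_
    by_cases hi : i ∈ t
    · have hX : (X i : MvPolynomial σ R) ∈ P := Ideal.subset_span ⟨i, hi, rfl⟩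
      simp [kill, hi, Ideal.Quotient.eq_zero_iff_mem.mpr hX]
    · simp [kill, hi]
  have hker : RingHom.ker kill = P := by
    refine le_antisymm (fun f hf => ?_) ?_
    · rw [← Ideal.Quotient.eq_zero_iff_mem, ← Ideal.Quotient.mkₐ_eq_mk R, ← hmk]
      simp [(RingHom.mem_ker).mp hf]
    · rw [Ideal.span_le]
      rintro _ ⟨i, hi, rfl⟩
      simp [kill, hi]
  exact hker ▸ RingHom.ker_isPrime kill

def weightGeIdeal (R : Type*) [CommSemiring R] (w : σ → ℕ) (j : ℕ) :
    Ideal (MvPolynomial σ R) :=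
  restrictSupportIdeal R {b | j ≤ Finsupp.weight w b} fun b c hbc hb => by
    obtain ⟨d, rfl⟩ := le_iff_exists_add.mp hbc
    simp only [Set.mem_ofPred_eq, map_add] at hb ⊢
    omega

variable [CommSemiring R]

theorem mem_weightGeIdeal {w : σ → ℕ} {j : ℕ} {f : MvPolynomial σ R} :
    f ∈ weightGeIdeal R w j ↔ ∀ b ∈ f.support, j ≤ Finsupp.weight w b := by
  show f ∈ restrictSupport R _ ↔ _
  simp [mem_restrictSupport_iff, Set.subset_def]

theorem weightGeIdeal_mul_le (w : σ → ℕ) (i j : ℕ) :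
    weightGeIdeal R w i * weightGeIdeal R w j ≤ weightGeIdeal R w (i + j) := by
  classical
  refine Ideal.mul_le.mpr fun f hf g hg => mem_weightGeIdeal.mpr fun b hb => ?_
  obtain ⟨c, hc, d, hd, rfl⟩ := Finset.mem_add.mp (support_mul f g hb)
  rw [map_add]
  exact add_le_add (mem_weightGeIdeal.mp hf c hc) (mem_weightGeIdeal.mp hg d hd)

theorem span_X_image_pow_le_weightGeIdeal (t : Set σ) (s : ℕ) :
    Ideal.span (X '' t : Set (MvPolynomial σ R)) ^ s ≤ weightGeIdeal R (t.indicator 1) s := by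
  induction s with
  | zero => exact fun f _ => mem_weightGeIdeal.mpr fun _ _ => Nat.zero_le _
  | succ s ih =>
    refine (Ideal.mul_mono ih fun f hf => mem_weightGeIdeal.mpr fun b hb => ?_).trans
      (weightGeIdeal_mul_le _ s 1)
    obtain ⟨i, hi, hbi⟩ := mem_ideal_span_X_image.mp hf b hb
    calc 1 = t.indicator 1 i := by simp [hi]
      _ ≤ Finsupp.weight (t.indicator 1) b := Finsupp.le_weight_of_ne_zero' _ hbi

end MvPolynomial

section Matching

variable {W : Type*} {H : SimpleGraph W}

/-- A matching, encoded as the involution exchanging the ends of each matching edge and fixing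
the unmatched vertices. -/
def IsInvMatching (H : SimpleGraph W) (f : W → W) : Prop :=
  Function.Involutive f ∧ ∀ x, f x ≠ x → H.Adj x (f x)

structure IsAugmentingPath (H : SimpleGraph W) (f : W → W) (m : ℕ) (x : ℕ → W) : Prop where
  odd : m % 2 = 1
  injOn : ∀ i ≤ m, ∀ j ≤ m, x i = x j → i = j
  adj : ∀ i < m, H.Adj (x i) (x (i + 1))
  fix_zero : f (x 0) = x 0
  fix_last : f (x m) = x m
  matched : ∀ i < m, i % 2 = 1 → f (x i) = x (i + 1)

/-- The partner of the `i`-th vertex of an augmenting path after flipping it. -/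
def pathPartner (i : ℕ) : ℕ := if i % 2 = 0 then i + 1 else i - 1

theorem pathPartner_pathPartner (i : ℕ) : pathPartner (pathPartner i) = i := by
  unfold pathPartner; split_ifs <;> omega

theorem pathPartner_ne (i : ℕ) : pathPartner i ≠ i := by
  unfold pathPartner; split_ifs <;> omega

open Classical in
/-- `f` with the path `x 0, …, x m` flipped. -/
def flipAlong (f : W → W) (m : ℕ) (x : ℕ → W) (z : W) : W :=
  if h : ∃ i ≤ m, x i = z then x (pathPartner (Nat.find h)) else f z

theorem flipAlong_of_not_exists {f : W → W} {m : ℕ} {x : ℕ → W} {z : W}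
    (hz : ¬ ∃ i ≤ m, x i = z) : flipAlong f m x z = f z :=
  dif_neg hz

namespace IsAugmentingPath

variable {f : W → W} {m : ℕ} {x : ℕ → W}

theorem exists_apply_eq (hf : IsInvMatching H f) (hx : IsAugmentingPath H f m x) {i : ℕ}
    (hi : i ≤ m) : ∃ j ≤ m, f (x i) = x j := by
  rcases Nat.eq_zero_or_pos i with rfl | hi0
  · exact ⟨0, Nat.zero_le _, hx.fix_zero⟩
  rcases hi.eq_or_lt with rfl | him
  · exact ⟨i, le_rfl, hx.fix_last⟩
  by_cases hodd : i % 2 = 1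
  · exact ⟨i + 1, by omega, hx.matched i him hodd⟩
  · refine ⟨i - 1, by omega, ?_⟩
    have h := hx.matched (i - 1) (by omega) (by omega)
    rw [Nat.sub_add_cancel hi0] at h
    rw [← h, hf.1]

theorem pathPartner_le (hx : IsAugmentingPath H f m x) {i : ℕ} (hi : i ≤ m) :
    pathPartner i ≤ m := by
  have := hx.odd
  unfold pathPartner; split_ifs <;> omega

theorem flipAlong_apply (hx : IsAugmentingPath H f m x) {i : ℕ} (hi : i ≤ m) :
    flipAlong f m x (x i) = x (pathPartner i) := by
  classical
  have h : ∃ j ≤ m, x j = x i := ⟨i, hi, rfl⟩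
  have hfind : Nat.find h = i := hx.injOn _ (Nat.find_spec h).1 i hi (Nat.find_spec h).2
  simp only [flipAlong, dif_pos h, hfind]

theorem flipAlong_apply_ne (hx : IsAugmentingPath H f m x) {i : ℕ} (hi : i ≤ m) :
    flipAlong f m x (x i) ≠ x i := by
  rw [hx.flipAlong_apply hi]
  exact fun h => pathPartner_ne i (hx.injOn _ (hx.pathPartner_le hi) i hi h)

theorem isInvMatching_flipAlong (hf : IsInvMatching H f) (hx : IsAugmentingPath H f m x) :
    IsInvMatching H (flipAlong f m x) := by
  have hf_off : ∀ z, (¬ ∃ i ≤ m, x i = z) → ¬ ∃ i ≤ m, x i = f z := by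
    rintro z hz ⟨j, hj, hfz⟩
    obtain ⟨j', hj', h⟩ := hx.exists_apply_eq hf hj
    exact hz ⟨j', hj', by rw [← h, hfz, hf.1]⟩
  refine ⟨fun z => ?_, fun z hz => ?_⟩
  · by_cases hz : ∃ i ≤ m, x i = z
    · obtain ⟨i, hi, rfl⟩ := hz
      rw [hx.flipAlong_apply hi, hx.flipAlong_apply (hx.pathPartner_le hi),
        pathPartner_pathPartner]
    · rw [flipAlong_of_not_exists hz, flipAlong_of_not_exists (hf_off z hz), hf.1]
  · by_cases hzp : ∃ i ≤ m, x i = z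
    · obtain ⟨i, hi, rfl⟩ := hzp
      rw [hx.flipAlong_apply hi]
      unfold pathPartner
      split_ifs with hev
      · exact hx.adj i (by have := hx.odd; omega)
      · have := hx.adj (i - 1) (by omega)
        rwa [Nat.sub_add_cancel (by omega), H.adj_comm] at this
    · rw [flipAlong_of_not_exists hzp] at hz ⊢
      exact hf.2 z hz

end IsAugmentingPath

variable [Fintype W] [DecidableEq W]

def movedSet (f : W → W) : Finset W := {x | f x ≠ x}

@[simp]
theorem mem_movedSet {f : W → W} {x : W} : x ∈ movedSet f ↔ f x ≠ x := by
  simp [movedSet]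

open Classical in
/-- The largest number of vertices covered by a matching: twice the matching number. -/
def maxMatched (H : SimpleGraph W) : ℕ :=
  (univ.filter (IsInvMatching H)).sup fun f => #(movedSet f)

def IsMaxInvMatching (H : SimpleGraph W) (f : W → W) : Prop :=
  IsInvMatching H f ∧ #(movedSet f) = maxMatched H

theorem IsInvMatching.card_le_maxMatched {f : W → W} (hf : IsInvMatching H f) :
    #(movedSet f) ≤ maxMatched H := by
  classical
  exact Finset.le_sup (f := fun f => #(movedSet f)) (Finset.mem_filter.mpr ⟨mem_univ _, hf⟩)

theorem exists_isMaxInvMatching (H : SimpleGraph W) : ∃ f, IsMaxInvMatching H f := by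
  classical
  obtain ⟨f, hf, hsup⟩ := Finset.exists_mem_eq_sup (univ.filter (IsInvMatching H))
    ⟨id, by simp [IsInvMatching, Function.Involutive]⟩ fun f => #(movedSet f)
  exact ⟨f, (Finset.mem_filter.mp hf).2, hsup.symm⟩

theorem IsInvMatching.even_card {f : W → W} (hf : IsInvMatching H f) : Even #(movedSet f) := by
  have hsupp : movedSet f = (hf.1.toPerm f).support := by ext; simp
  have hsq : hf.1.toPerm f ^ 2 = 1 := by ext x; simp [sq, hf.1 x]
  exact even_iff_two_dvd.mpr (hsupp ▸ Equiv.Perm.two_dvd_card_support hsq)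

theorem IsAugmentingPath.card_add_two_le_card_flipAlong {f : W → W} {m : ℕ} {x : ℕ → W}
    (hx : IsAugmentingPath H f m x) : #(movedSet f) + 2 ≤ #(movedSet (flipAlong f m x)) := by
  have hsub : insert (x 0) (insert (x m) (movedSet f)) ⊆ movedSet (flipAlong f m x) := by
    intro z hz
    simp only [mem_insert, mem_movedSet] at hz ⊢
    rcases hz with rfl | rfl | hz
    · exact hx.flipAlong_apply_ne (Nat.zero_le _)
    · exact hx.flipAlong_apply_ne le_rfl
    · by_cases hzp : ∃ i ≤ m, x i = z
      · obtain ⟨i, hi, rfl⟩ := hzp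
        exact hx.flipAlong_apply_ne hi
      · rwa [flipAlong_of_not_exists hzp]
  have h0m : x 0 ≠ x m := fun h => by
    have := hx.injOn 0 (Nat.zero_le _) m le_rfl h
    have := hx.odd
    omega
  calc #(movedSet f) + 2 = #(insert (x 0) (insert (x m) (movedSet f))) := by
        rw [card_insert_of_notMem (by simpa [h0m] using hx.fix_zero),
          card_insert_of_notMem (by simpa using hx.fix_last)]
    _ ≤ _ := card_le_card hsub

end Matching

theorem ZMod.eq_add_one_of_val {ℓ : ℕ} [NeZero ℓ] {x y : ZMod ℓ}
    (h : y.val = x.val + 1 ∨ x.val + 1 = ℓ ∧ y.val = 0) : y = x + 1 := by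
  rw [← ZMod.natCast_zmod_val y, ← ZMod.natCast_zmod_val x, ← Nat.cast_one, ← Nat.cast_add]
  rcases h with h | ⟨h1, h2⟩
  · rw [h]
  · rw [h1, h2, Nat.cast_zero, ZMod.natCast_self]

namespace SimpleGraph.Walk

variable {V : Type*} {G : SimpleGraph V} {u : V}

theorem exists_walk_of_forall_adj {w : ℕ → V} {ℓ : ℕ}
    (h : ∀ i < ℓ, G.Adj (w i) (w (i + 1))) :
    ∃ p : G.Walk (w 0) (w ℓ), p.length = ℓ := by
  induction ℓ with
  | zero => exact ⟨nil, rfl⟩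
  | succ ℓ ih =>
    obtain ⟨p, hp⟩ := ih fun i hi => h i (by omega)
    exact ⟨p.concat (h ℓ (by omega)), by simp [hp]⟩

theorem getVert_val_natCast (p : G.Walk u u) {a : ℕ} [NeZero p.length] (ha : a ≤ p.length) :
    p.getVert ((a : ZMod p.length).val) = p.getVert a := by
  rcases ha.lt_or_eq with ha | rfl
  · rw [ZMod.val_natCast_of_lt ha]
  · rw [ZMod.natCast_self, ZMod.val_zero, getVert_zero, getVert_length]

theorem exists_closed_of_getVert_eq (p : G.Walk u u) {i j : ℕ} (hij : i ≤ j)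
    (hj : j ≤ p.length) (h : p.getVert i = p.getVert j) :
    (∃ (v : V) (q : G.Walk v v), q.length = j - i) ∧
      ∃ q : G.Walk u u, q.length = p.length - (j - i) := by
  refine ⟨⟨_, ((p.drop i).take (j - i)).copy rfl (by rw [drop_getVert, h]; congr 1; omega),
    by simp [take_length, drop_length]; omega⟩, ⟨(p.take i).append ((p.drop j).copy h.symm rfl),
    by simp [take_length, drop_length]; omega⟩⟩

theorem exists_closed_of_adj_getVert (p : G.Walk u u) {i j : ℕ} (hij : i ≤ j)
    (hj : j ≤ p.length) (h : G.Adj (p.getVert i) (p.getVert j)) :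
    (∃ (v : V) (q : G.Walk v v), q.length = j - i + 1) ∧
      ∃ q : G.Walk u u, q.length = p.length - (j - i) + 1 := by
  have hend : (p.drop i).getVert (j - i) = p.getVert j := by rw [drop_getVert]; congr 1; omega
  refine ⟨⟨_, ((p.drop i).take (j - i)).concat (hend ▸ h.symm), ?_⟩,
    ⟨(p.take i).append (cons h (p.drop j)), ?_⟩⟩ <;>
  simp [take_length, drop_length] <;> omega

theorem isInducedCycleMap_getVert (q : G.Walk u u) [NeZero q.length]
    (hinj : ∀ a b, a < b → b < q.length → q.getVert a ≠ q.getVert b)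
    (hchord : ∀ a b, a < b → b < q.length → G.Adj (q.getVert a) (q.getVert b) →
      b = a + 1 ∨ a = 0 ∧ b + 1 = q.length) :
    IsInducedCycleMap G q.length fun i => q.getVert i.val := by
  have hsucc : ∀ i : ZMod q.length, q.getVert (i + 1).val = q.getVert (i.val + 1) := by
    intro i
    rw [← getVert_val_natCast q (a := i.val + 1) (ZMod.val_lt i), Nat.cast_add,
      ZMod.natCast_zmod_val, Nat.cast_one]
  refine ⟨⟨fun i j h => ZMod.val_injective _ ?_, fun i => ?_⟩, fun i j h => ?_⟩
  · rcases lt_trichotomy i.val j.val with hij | hij | hij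
    · exact absurd h (hinj _ _ hij (ZMod.val_lt j))
    · exact hij
    · exact absurd h.symm (hinj _ _ hij (ZMod.val_lt i))
  · simpa only [hsucc] using q.adj_getVert_succ (ZMod.val_lt i)
  · rcases lt_trichotomy i.val j.val with hij | hij | hij
    · rcases hchord _ _ hij (ZMod.val_lt j) h with h' | h'
      · exact Or.inl (ZMod.eq_add_one_of_val (Or.inl h'))
      · exact Or.inr (ZMod.eq_add_one_of_val (Or.inr h'.symm))
    · exact absurd h (by simp only [hij]; exact G.loopless.irrefl _)
    · rcases hchord _ _ hij (ZMod.val_lt i) h.symm with h' | h'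
      · exact Or.inr (ZMod.eq_add_one_of_val (Or.inl h'))
      · exact Or.inl (ZMod.eq_add_one_of_val (Or.inr h'.symm))

theorem isInducedCycleMap_getVert_of_minimal (q : G.Walk u u) (hodd : Odd q.length)
    (hmin : ∀ (v : V) (r : G.Walk v v), Odd r.length → q.length ≤ r.length) :
    IsInducedCycleMap G q.length fun i => q.getVert i.val := by
  set ℓ := q.length
  -- A repeated vertex or a chord cuts `q` into two shorter closed walks, one of them odd.
  have hcut : ∀ a b, a < ℓ → b < ℓ → Odd (a + b) →
      (∃ (v : V) (r : G.Walk v v), r.length = a) →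
      (∃ r : G.Walk u u, r.length = b) → False := by
    rintro a b ha hb hab ⟨v, r, rfl⟩ ⟨r', rfl⟩
    rcases Nat.even_or_odd r.length with he | ho
    · exact absurd (hmin u r' (by simpa [Nat.odd_add', he] using hab)) (by omega)
    · exact absurd (hmin v r ho) (by omega)
  have hℓ3 : 3 ≤ ℓ := by
    obtain ⟨m, hm⟩ := hodd
    have : ℓ ≠ 1 := fun h1 => G.loopless.irrefl u <| by
      have h := q.adj_getVert_succ (i := 0) (by omega)
      rwa [getVert_zero, q.getVert_of_length_le (by omega)] at h
    omega
  have : NeZero ℓ := ⟨by omega⟩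
  refine q.isInducedCycleMap_getVert (fun a b hab hb h => ?_) (fun a b hab hb h => ?_)
  · obtain ⟨h1, h2⟩ := q.exists_closed_of_getVert_eq hab.le hb.le h
    refine hcut _ _ (by omega) (by omega) ?_ h1 h2
    rwa [show b - a + (ℓ - (b - a)) = ℓ by omega]
  · by_contra hne
    obtain ⟨h1, h2⟩ := q.exists_closed_of_adj_getVert hab.le hb.le h
    refine hcut _ _ (by omega) (by omega) ?_ h1 h2
    rw [show b - a + 1 + (ℓ - (b - a) + 1) = ℓ + 2 by omega]
    exact hodd.add_even even_two

theorem exists_isInducedCycleMap_of_odd_length (p : G.Walk u u) (hodd : Odd p.length) :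
    ∃ m, 2 * m + 1 ≤ p.length ∧
      ∃ c : ZMod (2 * m + 1) → V, IsInducedCycleMap G (2 * m + 1) c := by
  classical
  have hex : ∃ ℓ, ∃ (v : V) (q : G.Walk v v), q.length = ℓ ∧ Odd ℓ :=
    ⟨_, u, p, rfl, hodd⟩
  obtain ⟨v, q, hq, hqodd⟩ := Nat.find_spec hex
  have hle : q.length ≤ p.length := hq ▸ Nat.find_min' hex ⟨u, p, rfl, hodd⟩
  have hmin : ∀ (w : V) (r : G.Walk w w), Odd r.length → q.length ≤ r.length :=
    fun w r hr => hq ▸ Nat.find_min' hex ⟨w, r, rfl, hr⟩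
  rw [← hq] at hqodd
  obtain ⟨m, hm⟩ := hqodd
  have hcyc := q.isInducedCycleMap_getVert_of_minimal ⟨m, hm⟩ hmin
  rw [hm] at hcyc
  exact ⟨m, hm ▸ hle, _, hcyc⟩

end SimpleGraph.Walk

section Alternating

variable {W : Type*} {f₁ f₂ : W → W}

def altStep (f₁ f₂ : W → W) (i : ℕ) : W → W := if i % 2 = 0 then f₂ else f₁

structure IsAltPath (f₁ f₂ : W → W) (T : ℕ) (w : ℕ → W) : Prop where
  fix_zero : f₁ (w 0) = w 0
  step : ∀ i, w (i + 1) = altStep f₁ f₂ i (w i)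
  moving : ∀ i < T, w (i + 1) ≠ w i

theorem altStep_congr {i j : ℕ} (h : i % 2 = j % 2) :
    altStep f₁ f₂ i = altStep f₁ f₂ j := by
  simp only [altStep, h]

theorem altStep_involutive (h₁ : Function.Involutive f₁) (h₂ : Function.Involutive f₂)
    (i : ℕ) : Function.Involutive (altStep f₁ f₂ i) := by
  unfold altStep; split_ifs <;> assumption

namespace IsAltPath

variable {T : ℕ} {w : ℕ → W}

theorem step_back (h₁ : Function.Involutive f₁) (h₂ : Function.Involutive f₂)
    (hw : IsAltPath f₁ f₂ T w) (i : ℕ) : w i = altStep f₁ f₂ i (w (i + 1)) := by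
  rw [hw.step, altStep_involutive h₁ h₂]

theorem injOn (h₁ : Function.Involutive f₁) (h₂ : Function.Involutive f₂)
    (hw : IsAltPath f₁ f₂ T w) : ∀ b ≤ T, ∀ a < b, w a ≠ w b := by
  intro b
  induction b using Nat.strong_induction_on with
  | _ b ih =>
  intro hbT a hab heq
  have hb := hw.step_back h₁ h₂ (b - 1)
  rw [Nat.sub_add_cancel (by omega)] at hb
  by_cases hpar : a % 2 = b % 2
  · rcases Nat.eq_zero_or_pos a with rfl | ha
    · refine hw.moving (b - 1) (by omega) ?_
      rw [Nat.sub_add_cancel (by omega), hb, ← heq, altStep_congr (j := 1) (by omega)]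
      simp [altStep, hw.fix_zero]
    · have ha' := hw.step_back h₁ h₂ (a - 1)
      rw [Nat.sub_add_cancel ha] at ha'
      refine ih (b - 1) (by omega) (by omega) (a - 1) (by omega) ?_
      rw [ha', hb, heq, altStep_congr (i := a - 1) (j := b - 1) (by omega)]
  · have hab' : w (a + 1) = w (b - 1) := by
      rw [hw.step, hb, heq, altStep_congr (i := a) (j := b - 1) (by omega)]
    by_cases hb' : a + 1 = b
    · exact hw.moving a (by omega) (by rw [hab', ← hb', Nat.add_sub_cancel, heq])
    · exact ih (b - 1) (by omega) (by omega) (a + 1) (by omega) hab'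

end IsAltPath

/-- The component of an `f₁`-unmatched vertex in the union of the matchings `f₁` and `f₂` is a
path. -/
theorem exists_isAltPath [Finite W] (h₁ : Function.Involutive f₁)
    (h₂ : Function.Involutive f₂) {u : W} (hu : f₁ u = u) :
    ∃ (T : ℕ) (w : ℕ → W), w 0 = u ∧ IsAltPath f₁ f₂ T w ∧ w (T + 1) = w T := by
  classical
  let w : ℕ → W := fun n => Nat.rec (motive := fun _ => W) u (fun i => altStep f₁ f₂ i) n
  have hstep : ∀ i, w (i + 1) = altStep f₁ f₂ i (w i) := fun _ => rfl
  have hstall : ∃ T, w (T + 1) = w T := by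
    by_contra! hne
    have hpath (T : ℕ) : IsAltPath f₁ f₂ T w := ⟨hu, hstep, fun i _ => hne i⟩
    obtain ⟨a, b, hab, heq⟩ := Finite.exists_ne_map_eq_of_infinite w
    rcases hab.lt_or_gt with hab | hab
    · exact (hpath b).injOn h₁ h₂ b le_rfl a hab heq
    · exact (hpath a).injOn h₁ h₂ a le_rfl b hab heq.symm
  obtain ⟨T, hT, hmoving⟩ : ∃ T, w (T + 1) = w T ∧ ∀ i < T, w (i + 1) ≠ w i :=
    ⟨Nat.find hstall, Nat.find_spec hstall, fun i hi => Nat.find_min hstall hi⟩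
  exact ⟨T, w, rfl, ⟨hu, hstep, hmoving⟩, hT⟩

end Alternating

namespace IsAltPath

variable {W : Type*} {H : SimpleGraph W} {f₁ f₂ : W → W} {T : ℕ} {w : ℕ → W}

theorem altStep_ne_left (hw : IsAltPath f₁ f₂ T w) {i : ℕ} (hi : i < T) :
    altStep f₁ f₂ i (w i) ≠ w i :=
  hw.step i ▸ hw.moving i hi

theorem altStep_ne_right (h₁ : Function.Involutive f₁) (h₂ : Function.Involutive f₂)
    (hw : IsAltPath f₁ f₂ T w) {i : ℕ} (hi : i < T) :
    altStep f₁ f₂ i (w (i + 1)) ≠ w (i + 1) :=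
  hw.step_back h₁ h₂ i ▸ (hw.moving i hi).symm

theorem adj (hf₁ : IsInvMatching H f₁) (hf₂ : IsInvMatching H f₂)
    (hw : IsAltPath f₁ f₂ T w) {i : ℕ} (hi : i < T) : H.Adj (w i) (w (i + 1)) := by
  rw [hw.step i]
  have hne := hw.altStep_ne_left hi
  unfold altStep at hne ⊢
  split_ifs at hne ⊢
  · exact hf₂.2 _ hne
  · exact hf₁.2 _ hne

theorem eq_of_le_of_eq (h₁ : Function.Involutive f₁) (h₂ : Function.Involutive f₂)
    (hw : IsAltPath f₁ f₂ T w) {i j : ℕ} (hi : i ≤ T) (hj : j ≤ T) (h : w i = w j) :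
    i = j := by
  rcases lt_trichotomy i j with hij | hij | hij
  · exact absurd h (hw.injOn h₁ h₂ j hj i hij)
  · exact hij
  · exact absurd h.symm (hw.injOn h₁ h₂ i hi j hij)

theorem eq_of_apply_eq_self (h₁ : Function.Involutive f₁) (h₂ : Function.Involutive f₂)
    (hw : IsAltPath f₁ f₂ T w) {j : ℕ} (hj : j ≤ T) (hfix : f₂ (w j) = w j) : j = T := by
  by_contra hne
  by_cases hev : j % 2 = 0
  · exact hw.altStep_ne_left (i := j) (by omega) (by simpa [altStep, hev] using hfix)
  · have := hw.altStep_ne_right h₁ h₂ (i := j - 1) (by omega)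
    rw [Nat.sub_add_cancel (by omega)] at this
    exact this (by simpa [altStep, show (j - 1) % 2 = 0 by omega] using hfix)

theorem isAugmentingPath_of_odd (hf₁ : IsInvMatching H f₁) (hf₂ : IsInvMatching H f₂)
    (hw : IsAltPath f₁ f₂ T w) (hstall : w (T + 1) = w T) (hT : T % 2 = 1) :
    IsAugmentingPath H f₁ T w where
  odd := hT
  injOn _ hi _ hj h := hw.eq_of_le_of_eq hf₁.1 hf₂.1 hi hj h
  adj _ hi := hw.adj hf₁ hf₂ hi
  fix_zero := hw.fix_zero
  fix_last := by simpa [hw.step T, altStep, hT] using hstall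
  matched i _ hodd := by simp [hw.step i, altStep, hodd]

theorem isAugmentingPath_cons (hf₁ : IsInvMatching H f₁) (hf₂ : IsInvMatching H f₂)
    (hw : IsAltPath f₁ f₂ T w) (hstall : w (T + 1) = w T) (hT : T % 2 = 0) {v : W}
    (hv : f₂ v = v) (hvw : ∀ j ≤ T, w j ≠ v) (hvu : H.Adj v (w 0)) :
    IsAugmentingPath H f₂ (T + 1) fun i => if i = 0 then v else w (i - 1) where
  odd := by omega
  injOn i hi j hj h := by
    rcases Nat.eq_zero_or_pos i with rfl | hi0 <;> rcases Nat.eq_zero_or_pos j with rfl | hj0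
    · rfl
    · exact absurd (by simpa [hj0.ne'] using h.symm) (hvw (j - 1) (by omega))
    · exact absurd (by simpa [hi0.ne'] using h) (hvw (i - 1) (by omega))
    · have := hw.eq_of_le_of_eq hf₁.1 hf₂.1 (i := i - 1) (j := j - 1) (by omega) (by omega)
        (by simpa [hi0.ne', hj0.ne'] using h)
      omega
  adj i hi := by
    rcases Nat.eq_zero_or_pos i with rfl | hi0
    · simpa using hvu
    · have := hw.adj hf₁ hf₂ (i := i - 1) (by omega)
      rw [Nat.sub_add_cancel hi0] at this
      simpa [hi0.ne'] using this
  fix_zero := by simpa using hv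
  fix_last := by simpa [hw.step T, altStep, hT] using hstall
  matched i hi hodd := by
    have := hw.step (i - 1)
    rw [Nat.sub_add_cancel (by omega)] at this
    simp [show i ≠ 0 by omega, this, altStep, show (i - 1) % 2 = 0 by omega]

theorem le_card_movedSet [Fintype W] [DecidableEq W] (h₁ : Function.Involutive f₁)
    (h₂ : Function.Involutive f₂) (hw : IsAltPath f₁ f₂ T w) (hT : T % 2 = 0) :
    T ≤ #(movedSet f₁) := by
  have hmoved : ∀ j ∈ Finset.Icc 1 T, w j ∈ movedSet f₁ := by
    intro j hj
    rw [Finset.mem_Icc] at hj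
    rw [mem_movedSet]
    by_cases hodd : j % 2 = 1
    · simpa [altStep, hodd] using hw.altStep_ne_left (i := j) (by omega)
    · have := hw.altStep_ne_right h₁ h₂ (i := j - 1) (by omega)
      rwa [Nat.sub_add_cancel hj.1, altStep, if_neg (by omega)] at this
  calc T = #((Finset.Icc 1 T).image w) := by
        rw [Finset.card_image_of_injOn, Nat.card_Icc, Nat.add_sub_cancel]
        intro i hi j hj h
        simp only [Finset.coe_Icc, Set.mem_Icc] at hi hj
        exact hw.eq_of_le_of_eq h₁ h₂ hi.2 hj.2 h
    _ ≤ #(movedSet f₁) := Finset.card_le_card (Finset.image_subset_iff.mpr hmoved)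

end IsAltPath

section Konig

variable {W : Type*} [Fintype W] [DecidableEq W] {H : SimpleGraph W}

theorem IsMaxInvMatching.not_isAugmentingPath {f : W → W} (hf : IsMaxInvMatching H f) {m : ℕ}
    {x : ℕ → W} : ¬ IsAugmentingPath H f m x := fun hx => by
  have := hx.card_add_two_le_card_flipAlong
  have := (hx.isInvMatching_flipAlong hf.1).card_le_maxMatched
  have := hf.2
  omega

theorem IsMaxInvMatching.apply_ne_of_adj
    (hodd : ∀ (x : W) (p : H.Walk x x), Odd p.length → maxMatched H + 1 < p.length)
    {u v : W} (huv : H.Adj u v) {f₁ f₂ : W → W} (hf₁ : IsMaxInvMatching H f₁)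
    (hu : f₁ u = u) (hf₂ : IsMaxInvMatching H f₂) : f₂ v ≠ v := by
  -- The alternating path from `u` is `f₁`-augmenting, or `f₂`-augmenting once `v` is put in
  -- front, or it ends at `v` and closes up into an odd closed walk of length
  -- at most `maxMatched H + 1`.
  intro hv
  obtain ⟨T, w, rfl, hw, hstall⟩ := exists_isAltPath hf₁.1.1 hf₂.1.1 hu
  rcases Nat.mod_two_eq_zero_or_one T with hT | hT
  · by_cases hvw : ∀ j ≤ T, w j ≠ v
    · exact hf₂.not_isAugmentingPath
        (hw.isAugmentingPath_cons hf₁.1 hf₂.1 hstall hT hv hvw huv.symm)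
    push Not at hvw
    obtain ⟨j, hj, rfl⟩ := hvw
    obtain rfl : j = T := hw.eq_of_apply_eq_self hf₁.1.1 hf₂.1.1 hj hv
    obtain ⟨p, hp⟩ := SimpleGraph.Walk.exists_walk_of_forall_adj (w := w) (ℓ := j)
      fun i hi => hw.adj hf₁.1 hf₂.1 hi
    have hlong := hodd _ (p.concat huv.symm) (by simp [hp, Nat.even_iff, hT])
    have hshort := hw.le_card_movedSet hf₁.1.1 hf₂.1.1 hT
    simp only [SimpleGraph.Walk.length_concat, hp] at hlong
    have := hf₁.2
    omega
  · exact hf₁.not_isAugmentingPath (hw.isAugmentingPath_of_odd hf₁.1 hf₂.1 hstall hT)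

theorem maxMatched_deleteIncidenceSet_add_two_le {v : W}
    (hv : ∀ f, IsMaxInvMatching H f → f v ≠ v) :
    maxMatched (H.deleteIncidenceSet v) + 2 ≤ maxMatched H := by
  obtain ⟨g, hg, hcard⟩ := exists_isMaxInvMatching (H.deleteIncidenceSet v)
  have hgH : IsInvMatching H g :=
    ⟨hg.1, fun x hx => (SimpleGraph.deleteIncidenceSet_adj.mp (hg.2 x hx)).1⟩
  have hgv : g v = v := by
    by_contra h
    exact (SimpleGraph.deleteIncidenceSet_adj.mp (hg.2 v h)).2.1 rfl
  have hne : #(movedSet g) ≠ maxMatched H := fun h => hv g ⟨hgH, h⟩ hgv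
  obtain ⟨f, hf⟩ := exists_isMaxInvMatching H
  obtain ⟨a, ha⟩ := hgH.even_card
  obtain ⟨b, hb⟩ := hf.1.even_card
  have := hgH.card_le_maxMatched
  have := hf.2
  omega

/-- König's theorem `τ = ν` for graphs whose odd cycles are all longer than `2ν + 1`: delete a
vertex covered by every maximum matching and recurse. -/
theorem exists_isVertexCover_two_mul_card_le
    (hodd : ∀ (x : W) (p : H.Walk x x), Odd p.length → maxMatched H + 1 < p.length) :
    ∃ D : Finset W, H.IsVertexCover D ∧ 2 * #D ≤ maxMatched H := by
  induction hN : maxMatched H using Nat.strong_induction_on generalizing H with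
  | _ N ih =>
  by_cases hess : ∃ v, ∀ f, IsMaxInvMatching H f → f v ≠ v
  · obtain ⟨v, hv⟩ := hess
    have hle := maxMatched_deleteIncidenceSet_add_two_le hv
    obtain ⟨D, hD, hcard⟩ := ih _ (by omega) (H := H.deleteIncidenceSet v) (fun x p hp => by
      have := hodd x (p.mapLe (H.deleteIncidenceSet_le v)) (by simpa using hp)
      simp only [SimpleGraph.Walk.length_mapLe] at this
      omega) rfl
    refine ⟨insert v D, fun x y hxy => ?_, ?_⟩
    · by_cases hx : x = v
      · simp [hx]
      by_cases hy : y = v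
      · simp [hy]
      have := hD (SimpleGraph.deleteIncidenceSet_adj.mpr ⟨hxy, hx, hy⟩)
      simpa using Or.imp Or.inr Or.inr this
    · have := Finset.card_insert_le v D
      omega
  · push Not at hess
    refine ⟨∅, fun x y hxy => ?_, by simp⟩
    obtain ⟨f₁, hf₁, hx⟩ := hess x
    obtain ⟨f₂, hf₂, hy⟩ := hess y
    exact absurd hy (hf₁.apply_ne_of_adj hodd hxy hx hf₂)

end Konig

section Parallelization

variable {V : Type*}

instance Finsupp.fintypeSigmaFin (b : V →₀ ℕ) : Fintype ((i : V) × Fin (b i)) where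
  elems := b.support.sigma fun _ => univ
  complete x := by simpa using (Fin.pos x.2).ne'

def parallelizationProj (G : SimpleGraph V) (v : V → ℕ) : parallelization G v →g G where
  toFun x := x.1
  map_rel' h := h

theorem prod_X_fst_eq_monomial {R : Type*} [CommSemiring R] (b : V →₀ ℕ) :
    ∏ x : (i : V) × Fin (b i), (X x.1 : MvPolynomial V R) = monomial b 1 := by
  rw [monomial_eq, C_1, one_mul, Finsupp.prod]
  exact (Finset.prod_sigma _ _ _).trans (by simp)

open Classical in
theorem card_filter_fst_mem (b : V →₀ ℕ) (C : Set V) :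
    #{x : (i : V) × Fin (b i) | x.1 ∈ C} = Finsupp.weight (C.indicator 1) b := by
  rw [Finset.card_filter, Finsupp.weight_apply, Finsupp.sum]
  refine (Finset.sum_sigma _ _ _).trans (Finset.sum_congr rfl fun i _ => ?_)
  by_cases hi : i ∈ C <;> simp [hi]

theorem exists_isVertexCover_weight_le_card {G : SimpleGraph V} {b : V →₀ ℕ}
    {D : Finset ((i : V) × Fin (b i))} (hD : (parallelization G b).IsVertexCover D) :
    ∃ C : Set V, G.IsVertexCover C ∧ Finsupp.weight (C.indicator 1) b ≤ #D := by
  classical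
  refine ⟨{v | ∀ j : Fin (b v), ⟨v, j⟩ ∈ D}, fun u v huv => ?_, ?_⟩
  · by_contra! h
    obtain ⟨ju, hju⟩ : ∃ j, ⟨u, j⟩ ∉ D := by simpa using h.1
    obtain ⟨jv, hjv⟩ : ∃ j, ⟨v, j⟩ ∉ D := by simpa using h.2
    rcases @hD ⟨u, ju⟩ ⟨v, jv⟩ huv with h | h
    · exact hju h
    · exact hjv h
  · rw [← card_filter_fst_mem]
    refine Finset.card_le_card fun x hx => ?_
    simp only [Finset.mem_filter] at hx
    exact hx.2 x.2

end Parallelization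

section EdgeIdeal

variable {k : Type*} [Field k] {V : Type*} {G : SimpleGraph V}

theorem edgeIdeal_le_span_X_image {C : Set V} (hC : G.IsVertexCover C) :
    edgeIdeal k G ≤ Ideal.span (X '' C) := by
  rw [edgeIdeal, Ideal.span_le]
  rintro _ ⟨u, v, huv, rfl⟩
  rcases hC huv with h | h
  · exact Ideal.mul_mem_right _ _ (Ideal.subset_span ⟨u, h, rfl⟩)
  · exact Ideal.mul_mem_left _ _ (Ideal.subset_span ⟨v, h, rfl⟩)

theorem prod_X_movedSet_mem_edgeIdeal_pow {W : Type*} [Fintype W] [DecidableEq W]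
    {H : SimpleGraph W} (φ : H →g G) {f : W → W} (hf : IsInvMatching H f) :
    ∏ x ∈ movedSet f, (X (φ x) : MvPolynomial V k) ∈
      edgeIdeal k G ^ (#(movedSet f) / 2) := by
  suffices ∀ S ⊆ movedSet f, (∀ x ∈ S, f x ∈ S) →
      ∏ x ∈ S, (X (φ x) : MvPolynomial V k) ∈ edgeIdeal k G ^ (#S / 2) from
    this _ subset_rfl fun x hx => by
      rw [mem_movedSet, hf.1 x]
      exact (mem_movedSet.mp hx).symm
  intro S
  induction S using Finset.strongInduction with
  | H S ih =>
  intro hSf hSclosed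
  rcases S.eq_empty_or_nonempty with rfl | ⟨x, hx⟩
  · simp
  have hfx : f x ≠ x := mem_movedSet.mp (hSf hx)
  have hfxS : f x ∈ S.erase x := Finset.mem_erase.mpr ⟨hfx, hSclosed x hx⟩
  set S' := (S.erase x).erase (f x)
  have hS' : S' ⊂ S := (Finset.erase_subset _ _).trans_ssubset (Finset.erase_ssubset hx)
  have hclosed' : ∀ y ∈ S', f y ∈ S' := by
    intro y hy
    simp only [S', Finset.mem_erase] at hy ⊢
    exact ⟨fun h => hy.2.1 (hf.1.injective h), fun h => hy.1 (by rw [← h, hf.1]),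
      hSclosed y hy.2.2⟩
  have hcard : #S = #S' + 2 := by
    rw [Finset.card_erase_of_mem hfxS, Finset.card_erase_of_mem hx]
    have := Finset.card_pos.mpr ⟨x, hx⟩
    have := Finset.card_pos.mpr ⟨f x, hfxS⟩
    rw [Finset.card_erase_of_mem hx] at this
    omega
  rw [← Finset.mul_prod_erase _ _ hx, ← Finset.mul_prod_erase _ _ hfxS, ← mul_assoc, hcard,
    show (#S' + 2) / 2 = #S' / 2 + 1 by omega, pow_succ']
  refine Ideal.mul_mem_mul (Ideal.subset_span ⟨φ x, φ (f x), φ.map_rel (hf.2 x hfx), rfl⟩)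
    (ih S' hS' ((Finset.erase_subset _ _).trans ((Finset.erase_subset _ _).trans hSf)) hclosed')

end EdgeIdeal

section MainArgument

variable {k : Type*} [Field k] {V : Type*} {G : SimpleGraph V}

theorem two_mul_add_one_le_length {n : ℕ}
    (hmin : ∀ (m : ℕ) (c : ZMod (2 * m + 1) → V),
      IsInducedCycleMap G (2 * m + 1) c → n ≤ m)
    {u : V} (p : G.Walk u u) (hodd : Odd p.length) : 2 * n + 1 ≤ p.length := by
  obtain ⟨m, hm, c, hc⟩ := p.exists_isInducedCycleMap_of_odd_length hodd
  have := hmin m c hc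
  omega

/-- A maximum matching of the parallelization `G^b` has at least `s` edges: König's theorem
applies to `G^b`, and a cover of `G^b` of size `< s` would give a cover of `G` of weight `< s`. -/
theorem monomial_mem_edgeIdeal_pow {s : ℕ}
    (hodd : ∀ (u : V) (p : G.Walk u u), Odd p.length → 2 * s < p.length) {b : V →₀ ℕ}
    (hb : ∀ C : Set V, G.IsVertexCover C → s ≤ Finsupp.weight (C.indicator 1) b) (c : k) :
    monomial b c ∈ edgeIdeal k G ^ s := by
  classical
  have h2s : 2 * s ≤ maxMatched (parallelization G b) := by
    by_contra! hlt
    obtain ⟨D, hD, hcard⟩ := exists_isVertexCover_two_mul_card_le fun x p hp => by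
      have := hodd _ (p.map (parallelizationProj G b)) (by rwa [SimpleGraph.Walk.length_map])
      rw [SimpleGraph.Walk.length_map] at this
      omega
    obtain ⟨C, hC, hwC⟩ := exists_isVertexCover_weight_le_card hD
    have := hb C hC
    omega
  obtain ⟨f, hf, hcard⟩ := exists_isMaxInvMatching (parallelization G b)
  have hprod := prod_X_movedSet_mem_edgeIdeal_pow (k := k) (parallelizationProj G b) hf
  rw [← mul_one c, ← C_mul_monomial, ← prod_X_fst_eq_monomial,
    ← Finset.prod_mul_prod_compl (movedSet f)]
  exact Ideal.mul_mem_left _ _ (Ideal.mul_mem_right _ _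
    (Ideal.pow_le_pow_right (by omega) hprod))

theorem symbPow_edgeIdeal_le_pow {s : ℕ}
    (hodd : ∀ (u : V) (p : G.Walk u u), Odd p.length → 2 * s < p.length) :
    (edgeIdeal k G).symbPow s ≤ edgeIdeal k G ^ s := by
  intro f hf
  have hweight (C : Set V) (hC : G.IsVertexCover C) (b : V →₀ ℕ) (hb : b ∈ f.support) :
      s ≤ Finsupp.weight (C.indicator 1) b := by
    have := isPrime_span_X_image (R := k) C
    exact mem_weightGeIdeal.mp (span_X_image_pow_le_weightGeIdeal C s
      (Ideal.symbPow_le_pow_of_le (edgeIdeal_le_span_X_image hC) s hf)) b hb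
  rw [f.as_sum]
  exact Ideal.sum_mem _ fun b hb => monomial_mem_edgeIdeal_pow hodd (hweight · · b hb) _

end MainArgument

theorem stmt6_general (k : Type*) [Field k] {V : Type*} (G : SimpleGraph V) (n : ℕ)
    (hmin : ∀ (m : ℕ) (c : ZMod (2 * m + 1) → V), IsInducedCycleMap G (2 * m + 1) c → n ≤ m)
    (s : ℕ) (hs : s ≤ n) :
    Ideal.symbPow (edgeIdeal k G) s = edgeIdeal k G ^ s := by
  have hodd (u : V) (p : G.Walk u u) (hp : Odd p.length) : 2 * s < p.length := by
    have := two_mul_add_one_le_length hmin p hp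
    omega
  exact le_antisymm (symbPow_edgeIdeal_le_pow hodd) ((edgeIdeal k G).pow_le_symbPow s)

/-- If `G` is non-bipartite and its smallest induced odd cycle has length `2n+1`,
then `I(G)^{(s)} = I(G)ˢ` for all `s ≤ n`. -/
theorem stmt6 (k : Type*) [Field k] {V : Type*} (G : SimpleGraph V)
    (hnb : ¬ G.Colorable 2) (n : ℕ)
    (hex : ∃ c : ZMod (2 * n + 1) → V, IsInducedCycleMap G (2 * n + 1) c)
    (hmin : ∀ (m : ℕ) (c : ZMod (2 * m + 1) → V), IsInducedCycleMap G (2 * m + 1) c → n ≤ m)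
    (s : ℕ) (hs : s ≤ n) :
    Ideal.symbPow (edgeIdeal k G) s = edgeIdeal k G ^ s :=
  stmt6_general k G n hmin s hs
end
end

section
/- Let G be an odd bicyclic graph whose two odd cycles form the unique bow B of size m+n+1. For s > m+n+1 and u_j a minimal monomial generator of I(G)^{s-m-n-1}, if m_B·u_j ∉ I(G)^s then the colon ideal I(G)^s : (m_B u_j) is minimally generated by monomials of degree at most two. -/
open MvPolynomial

noncomputable section

/-!
Write `m_B u = x^D`. An odd cycle of length `2l + 1` contains a matching of `l` edges and `u` is a
product of `s - m - n - 1` edges, so `x^D` is divisible by a product `e₁ ⋯ e_{s-1}` of edges.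
Banerjee's theorem then shows that whenever `x^a x^D ∈ I^s`, already some divisor of `x^a` of
degree at most two multiplies `x^D` into `I^s`. As `I^s : x^D` is a monomial ideal, its minimal
monomials form an irredundant generating set, and by the above each of them has degree at most two.

Banerjee's theorem is proved by induction on the edges `eᵢ`, after replacing the `s` edges of a
witness of `x^a ∏ eᵢ ∈ I^s` by even-connected pairs. If the pairs still divide `x^a ∏_{j ≠ i} eⱼ`,
drop `eᵢ`. Otherwise an endpoint `c` of `eᵢ` lies on some pair `(c, u)`: if the other endpoint `c'`
lies on a second pair `(c', v)`, the two pairs glue through `eᵢ` to the even-connected pair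
`(u, v)`; if not, `eᵢ` is discarded together with the pair `(c, u)`.
-/

open Finsupp

section EdgeExponents

variable {V : Type*}

def pairExp (p : V × V) : V →₀ ℕ := single p.1 1 + single p.2 1

def edgeExp (L : Multiset (V × V)) : V →₀ ℕ := (L.map pairExp).sum

@[simp] lemma edgeExp_zero : edgeExp (0 : Multiset (V × V)) = 0 := rfl

@[simp] lemma edgeExp_cons (p : V × V) (L : Multiset (V × V)) :
    edgeExp (p ::ₘ L) = pairExp p + edgeExp L := by
  simp [edgeExp]

@[simp] lemma edgeExp_add (L M : Multiset (V × V)) : edgeExp (L + M) = edgeExp L + edgeExp M := by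
  simp [edgeExp]

@[simp] lemma degree_pairExp (p : V × V) : (pairExp p).degree = 2 := by
  simp [pairExp]

lemma exists_pairExp_eq_of_apply_ne_zero {p : V × V} {x : V} (h : pairExp p x ≠ 0) :
    ∃ y, pairExp p = single x 1 + single y 1 := by
  by_cases h₁ : p.1 = x
  · exact ⟨p.2, by rw [pairExp, h₁]⟩
  · have h₂ : p.2 = x := by
      by_contra h₂
      simp [pairExp, h₁, h₂] at h
    exact ⟨p.1, by rw [pairExp, h₂, add_comm]⟩

lemma exists_mem_of_edgeExp_apply_ne_zero {L : Multiset (V × V)} {x : V}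
    (h : edgeExp L x ≠ 0) : ∃ p ∈ L, pairExp p x ≠ 0 := by
  obtain ⟨f, hf, hx⟩ := mem_support_multiset_sum x (mem_support_iff.mpr h)
  obtain ⟨p, hp, rfl⟩ := Multiset.mem_map.mp hf
  exact ⟨p, hp, mem_support_iff.mp hx⟩

end EdgeExponents

section MonomialColon

variable {σ R : Type*} [CommSemiring R] [Nontrivial R]

lemma colon_span_monomial_eq_span_minimal (J : Ideal (MvPolynomial σ R)) (T : Set (σ →₀ ℕ))
    (hJ : ∀ f, f ∈ J ↔ ∀ a ∈ f.support, a ∈ T) (D : σ →₀ ℕ) :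
    J.colon (Ideal.span {monomial D (1 : R)}) =
      Ideal.span ((fun d => monomial d (1 : R)) '' {d | Minimal (fun d => d + D ∈ T) d}) := by
  classical
  have hcolon : ∀ f, f ∈ J.colon (Ideal.span {monomial D (1 : R)}) ↔ f * monomial D 1 ∈ J :=
    fun f => Submodule.mem_colon_span_singleton.trans (by rw [smul_eq_mul])
  refine le_antisymm (fun f hf => ?_) (Ideal.span_le.mpr ?_)
  · rw [mem_ideal_span_monomial_image]
    intro a ha
    have haD : a + D ∈ T := (hJ _).mp ((hcolon f).mp hf) _ (by
      rw [MvPolynomial.mem_support_iff, coeff_mul_monomial, mul_one]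
      exact MvPolynomial.mem_support_iff.mp ha)
    obtain ⟨d, hda, hd⟩ := exists_minimal_le_of_wellFoundedLT (fun d => d + D ∈ T) a haD
    exact ⟨d, hd, hda⟩
  · rintro _ ⟨d, hd, rfl⟩
    rw [SetLike.mem_coe, hcolon, monomial_mul, one_mul, hJ, support_monomial, if_neg one_ne_zero]
    simpa using hd.1

lemma monomial_notMem_span_minimal_diff {P : (σ →₀ ℕ) → Prop} {d : σ →₀ ℕ} (hd : Minimal P d) :
    monomial d (1 : R) ∉
      Ideal.span ((fun d => monomial d (1 : R)) '' {d | Minimal P d} \ {monomial d 1}) := by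
  classical
  rw [← Set.image_singleton (f := fun d => monomial d (1 : R)),
    ← Set.image_sdiff (monomial_left_injective one_ne_zero),
    mem_ideal_span_monomial_image]
  intro h
  obtain ⟨d', ⟨hd', hne⟩, hle⟩ := h d (by simp [support_monomial])
  exact hne (hd.eq_of_le hd'.prop hle)

end MonomialColon

lemma prod_X_eq_monomial {k V ι : Type*} [CommSemiring k] [Fintype ι] (c : ι → V) :
    (∏ i, X (c i) : MvPolynomial V k) = monomial (∑ i, single (c i) 1) 1 := by
  simp [monomial_sum_one, X]

section EdgePowers

variable {V : Type*} (G : SimpleGraph V)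

def edgePowExps (s : ℕ) : Set (V →₀ ℕ) :=
  {d | ∃ L : Multiset (V × V), (∀ p ∈ L, G.Adj p.1 p.2) ∧ L.card = s ∧ edgeExp L ≤ d}

variable {G}

lemma edgeExp_mem_edgePowExps {L : Multiset (V × V)} (hL : ∀ p ∈ L, G.Adj p.1 p.2) :
    edgeExp L ∈ edgePowExps G L.card :=
  ⟨L, hL, rfl, le_rfl⟩

lemma mem_edgePowExps_of_le {s : ℕ} {d d' : V →₀ ℕ} (hd : d ∈ edgePowExps G s) (hle : d ≤ d') :
    d' ∈ edgePowExps G s :=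
  let ⟨L, hL, hcard, hLd⟩ := hd
  ⟨L, hL, hcard, hLd.trans hle⟩

lemma add_mem_edgePowExps {s t : ℕ} {d d' : V →₀ ℕ} (hd : d ∈ edgePowExps G s)
    (hd' : d' ∈ edgePowExps G t) : d + d' ∈ edgePowExps G (s + t) := by
  obtain ⟨L, hL, rfl, hLd⟩ := hd
  obtain ⟨L', hL', rfl, hLd'⟩ := hd'
  refine ⟨L + L', ?_, Multiset.card_add L L', ?_⟩
  · simpa [or_imp, forall_and] using And.intro hL hL'
  · simpa using add_le_add hLd hLd'

variable (k : Type*) [Field k]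

lemma X_mul_X_eq_monomial (u v : V) :
    (X u * X v : MvPolynomial V k) = monomial (pairExp (u, v)) 1 := by
  rw [X, X, monomial_mul, one_mul, pairExp]

lemma monomial_edgeExp_mem_edgeIdeal_pow {L : Multiset (V × V)} (hL : ∀ p ∈ L, G.Adj p.1 p.2) :
    monomial (edgeExp L) (1 : k) ∈ edgeIdeal k G ^ L.card := by
  induction L using Multiset.induction with
  | empty => simp
  | cons p L ih =>
    rw [edgeExp_cons, ← one_mul (1 : k), ← monomial_mul, Multiset.card_cons, pow_succ']
    refine Ideal.mul_mem_mul (Ideal.subset_span ⟨p.1, p.2, hL p (by simp), ?_⟩)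
      (ih fun q hq => hL q (Multiset.mem_cons_of_mem hq))
    rw [X_mul_X_eq_monomial]

lemma edgeIdeal_pow_eq_span (s : ℕ) :
    edgeIdeal k G ^ s = Ideal.span ((fun d => monomial d (1 : k)) '' edgePowExps G s) := by
  refine le_antisymm ?_ (Ideal.span_le.mpr ?_)
  · induction s with
    | zero =>
      rw [pow_zero, Ideal.one_eq_top, top_le_iff, Ideal.eq_top_iff_one]
      exact Ideal.subset_span ⟨0, ⟨0, by simp, rfl, le_rfl⟩, by simp⟩
    | succ s ih =>
      have hI : edgeIdeal k G ≤ Ideal.span ((fun d => monomial d (1 : k)) '' edgePowExps G 1) := by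
        refine Ideal.span_le.mpr ?_
        rintro _ ⟨u, v, huv, rfl⟩
        refine Ideal.subset_span ⟨pairExp (u, v), ?_, (X_mul_X_eq_monomial k u v).symm⟩
        simpa [edgeExp] using edgeExp_mem_edgePowExps (G := G) (L := {(u, v)}) (by simpa using huv)
      rw [pow_succ]
      refine (Ideal.mul_mono ih hI).trans ?_
      rw [Ideal.span_mul_span']
      refine Ideal.span_mono ?_
      rintro _ ⟨_, ⟨d, hd, rfl⟩, _, ⟨d', hd', rfl⟩, rfl⟩
      exact ⟨d + d', add_mem_edgePowExps hd hd', by simp [monomial_mul]⟩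
  · rintro _ ⟨d, ⟨L, hL, rfl, hLd⟩, rfl⟩
    change monomial d (1 : k) ∈ _
    rw [← tsub_add_cancel_of_le hLd, ← one_mul (1 : k), ← monomial_mul]
    exact Ideal.mul_mem_left _ _ (monomial_edgeExp_mem_edgeIdeal_pow k hL)

lemma mem_edgeIdeal_pow_iff {s : ℕ} {f : MvPolynomial V k} :
    f ∈ edgeIdeal k G ^ s ↔ ∀ a ∈ f.support, a ∈ edgePowExps G s := by
  rw [edgeIdeal_pow_eq_span, mem_ideal_span_monomial_image]
  exact forall₂_congr fun a _ =>
    ⟨fun ⟨_, hd, hle⟩ => mem_edgePowExps_of_le hd hle, fun ha => ⟨a, ha, le_rfl⟩⟩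

lemma monomial_mem_edgeIdeal_pow_iff {s : ℕ} {d : V →₀ ℕ} :
    monomial d (1 : k) ∈ edgeIdeal k G ^ s ↔ d ∈ edgePowExps G s := by
  classical
  rw [mem_edgeIdeal_pow_iff, support_monomial, if_neg one_ne_zero]
  simp

end EdgePowers

section Banerjee

variable {V : Type*} {G : SimpleGraph V}

variable (G) in
/-- The algebraic shadow of Banerjee's even-connectedness of `g.1` and `g.2` through the
edges `C`. -/
def IsEvenConnected (g : V × V) (C : Multiset (V × V)) : Prop :=
  (∀ p ∈ C, G.Adj p.1 p.2) ∧ pairExp g + edgeExp C ∈ edgePowExps G (C.card + 1)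

lemma IsEvenConnected.join {g g' e : V × V} {C C' : Multiset (V × V)} {c c' u v : V}
    (h : IsEvenConnected G g C) (h' : IsEvenConnected G g' C') (he : G.Adj e.1 e.2)
    (hg : pairExp g = single c 1 + single u 1) (hg' : pairExp g' = single c' 1 + single v 1)
    (he' : pairExp e = single c 1 + single c' 1) :
    IsEvenConnected G (u, v) (e ::ₘ (C + C')) := by
  refine ⟨?_, ?_⟩
  · simp only [Multiset.forall_mem_cons, Multiset.mem_add, or_imp, forall_and]
    exact ⟨he, h.1, h'.1⟩
  · convert add_mem_edgePowExps h.2 h'.2 using 1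
    · simp only [Multiset.card_cons, Multiset.card_add]
      congr 1
      omega
    · rw [edgeExp_cons, edgeExp_add, he', hg, hg', pairExp]
      abel

variable (G) in
def HasQuadraticColonDivisor (F : V →₀ ℕ) (M : Multiset (V × V)) : Prop :=
  ∃ F' ≤ F, F'.degree ≤ 2 ∧ F' + edgeExp M ∈ edgePowExps G (M.card + 1)

lemma HasQuadraticColonDivisor.add {F : V →₀ ℕ} {M N : Multiset (V × V)}
    (h : HasQuadraticColonDivisor G F M) (hN : ∀ p ∈ N, G.Adj p.1 p.2) :
    HasQuadraticColonDivisor G F (M + N) := by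
  obtain ⟨F', hF', hdeg, hmem⟩ := h
  refine ⟨F', hF', hdeg, ?_⟩
  convert add_mem_edgePowExps hmem (edgeExp_mem_edgePowExps hN) using 1
  · rw [Multiset.card_add]
    congr 1
    omega
  · rw [edgeExp_add, add_assoc]

variable (G) in
/-- The form of Banerjee's theorem that survives induction on `E`: the `|E| + 1` edges of a
witness of `x^F ∏ E ∈ I(G)^{|E|+1}` are generalised to even-connected pairs. -/
def SatisfiesBanerjee (E : Multiset (V × V)) : Prop :=
  ∀ (Gs : Multiset ((V × V) × Multiset (V × V))) (F : V →₀ ℕ),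
    (∀ gC ∈ Gs, IsEvenConnected G gC.1 gC.2) → E.card < Gs.card →
    edgeExp (Gs.map Prod.fst) ≤ F + edgeExp E →
    HasQuadraticColonDivisor G F (E + Gs.bind Prod.snd)

lemma satisfiesBanerjee_zero : SatisfiesBanerjee G 0 := by
  intro Gs F hGs hcard hA
  obtain ⟨⟨g, C⟩, hgC⟩ := Multiset.exists_mem_of_ne_zero (Multiset.card_pos.mp hcard)
  obtain ⟨Gs, rfl⟩ := Multiset.exists_cons_of_mem hgC
  have hgF : pairExp g ≤ F := by
    simp only [Multiset.map_cons, edgeExp_cons, edgeExp_zero, add_zero] at hA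
    exact le_self_add.trans hA
  have hrest : ∀ p ∈ Gs.bind Prod.snd, G.Adj p.1 p.2 := by
    simp only [Multiset.mem_bind]
    rintro p ⟨gC, hgC, hp⟩
    exact (hGs gC (Multiset.mem_cons_of_mem hgC)).1 p hp
  refine ⟨pairExp g, hgF, by simp, ?_⟩
  convert add_mem_edgePowExps (hGs _ (Multiset.mem_cons_self _ _)).2
    (edgeExp_mem_edgePowExps hrest) using 1
  · simp only [Multiset.cons_bind, zero_add, Multiset.card_add]
    congr 1
    omega
  · simp only [Multiset.cons_bind, zero_add, edgeExp_add, add_assoc]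

section Step

variable {E : Multiset (V × V)} {e g : V × V} {C : Multiset (V × V)}
  {Gs : Multiset ((V × V) × Multiset (V × V))} {F : V →₀ ℕ} {c c' u : V}

lemma SatisfiesBanerjee.cons_glue {g' : V × V} {C' : Multiset (V × V)} {v : V}
    (hE : SatisfiesBanerjee G E) (he : G.Adj e.1 e.2)
    (he' : pairExp e = single c 1 + single c' 1) (hg : pairExp g = single c 1 + single u 1)
    (hg' : pairExp g' = single c' 1 + single v 1)
    (hGs : ∀ gC ∈ (g, C) ::ₘ (g', C') ::ₘ Gs, IsEvenConnected G gC.1 gC.2)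
    (hcard : (e ::ₘ E).card < ((g, C) ::ₘ (g', C') ::ₘ Gs).card)
    (hA : edgeExp (((g, C) ::ₘ (g', C') ::ₘ Gs).map Prod.fst) ≤ F + edgeExp (e ::ₘ E)) :
    HasQuadraticColonDivisor G F (e ::ₘ E + ((g, C) ::ₘ (g', C') ::ₘ Gs).bind Prod.snd) := by
  have hjoin : IsEvenConnected G (u, v) (e ::ₘ (C + C')) :=
    (hGs _ (Multiset.mem_cons_self _ _)).join
      (hGs _ (Multiset.mem_cons_of_mem (Multiset.mem_cons_self _ _))) he hg hg' he'
  have hA' : edgeExp ((((u, v), e ::ₘ (C + C')) ::ₘ Gs).map Prod.fst) ≤ F + edgeExp E := by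
    refine le_of_add_le_add_right (a := pairExp e) ?_
    simp only [Multiset.map_cons, edgeExp_cons] at hA ⊢
    calc pairExp (u, v) + edgeExp (Gs.map Prod.fst) + pairExp e
        = pairExp g + (pairExp g' + edgeExp (Gs.map Prod.fst)) := by
          rw [hg, hg', he', pairExp]
          abel
      _ ≤ F + (pairExp e + edgeExp E) := hA
      _ = F + edgeExp E + pairExp e := by abel
  have := hE _ F (by simp only [Multiset.forall_mem_cons] at hGs ⊢; exact ⟨hjoin, hGs.2.2⟩)
    (by simp at hcard ⊢; omega) hA'
  convert this using 1
  simp only [Multiset.cons_bind, Multiset.cons_add, Multiset.add_cons, add_assoc]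

lemma SatisfiesBanerjee.cons_discard (hE : SatisfiesBanerjee G E) (he : G.Adj e.1 e.2)
    (he' : pairExp e = single c 1 + single c' 1) (hg : pairExp g = single c 1 + single u 1)
    (hc' : edgeExp (Gs.map Prod.fst) c' = 0)
    (hGs : ∀ gC ∈ (g, C) ::ₘ Gs, IsEvenConnected G gC.1 gC.2)
    (hcard : (e ::ₘ E).card < ((g, C) ::ₘ Gs).card)
    (hA : edgeExp (((g, C) ::ₘ Gs).map Prod.fst) ≤ F + edgeExp (e ::ₘ E)) :
    HasQuadraticColonDivisor G F (e ::ₘ E + ((g, C) ::ₘ Gs).bind Prod.snd) := by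
  -- away from `c'`, the edge `e` contributes no more than the pair `g` does
  have hA' : edgeExp (Gs.map Prod.fst) ≤ F + edgeExp E := by
    intro y
    by_cases hy : y = c'
    · simp [hy, hc']
    · have := hA y
      simp only [Multiset.map_cons, edgeExp_cons, Finsupp.add_apply, he', hg,
        single_eq_of_ne hy] at this ⊢
      omega
  have hGs' : ∀ gC ∈ Gs, IsEvenConnected G gC.1 gC.2 := fun gC h =>
    hGs gC (Multiset.mem_cons_of_mem h)
  have hC : ∀ p ∈ e ::ₘ C, G.Adj p.1 p.2 :=
    Multiset.forall_mem_cons.mpr ⟨he, (hGs _ (Multiset.mem_cons_self _ _)).1⟩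
  have := (hE Gs F hGs' (by simp at hcard; omega) hA').add hC
  convert this using 1
  simp only [Multiset.cons_bind, Multiset.cons_add, Multiset.add_cons]
  rw [add_right_comm, add_assoc]

lemma SatisfiesBanerjee.cons (hE : SatisfiesBanerjee G E) (he : G.Adj e.1 e.2) :
    SatisfiesBanerjee G (e ::ₘ E) := by
  intro Gs F hGs hcard hA
  by_cases hdiv : edgeExp (Gs.map Prod.fst) ≤ F + edgeExp E
  · have := (hE Gs F hGs (by simp at hcard; omega) hdiv).add (N := {e}) (by simpa using he)
    convert this using 1
    rw [← Multiset.singleton_add]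
    abel
  obtain ⟨c, hc⟩ : ∃ c, F c + edgeExp E c < edgeExp (Gs.map Prod.fst) c := by
    simpa [Finsupp.le_def] using hdiv
  have hce : pairExp e c ≠ 0 := by
    have := hA c
    simp only [edgeExp_cons, Finsupp.add_apply] at this
    omega
  obtain ⟨c', he'⟩ := exists_pairExp_eq_of_apply_ne_zero hce
  obtain ⟨g, hgGs, hcg⟩ :=
    exists_mem_of_edgeExp_apply_ne_zero (by omega : edgeExp (Gs.map Prod.fst) c ≠ 0)
  obtain ⟨⟨g, C⟩, hgC, rfl⟩ := Multiset.mem_map.mp hgGs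
  obtain ⟨u, hg⟩ := exists_pairExp_eq_of_apply_ne_zero hcg
  obtain ⟨Gs, rfl⟩ := Multiset.exists_cons_of_mem hgC
  by_cases hglue : ∃ g' ∈ Gs.map Prod.fst, pairExp g' c' ≠ 0
  · obtain ⟨g', hg'Gs, hc'g'⟩ := hglue
    obtain ⟨⟨g', C'⟩, hg'C', rfl⟩ := Multiset.mem_map.mp hg'Gs
    obtain ⟨v, hg'⟩ := exists_pairExp_eq_of_apply_ne_zero hc'g'
    obtain ⟨Gs, rfl⟩ := Multiset.exists_cons_of_mem hg'C'
    exact hE.cons_glue he he' hg hg' hGs hcard hA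
  · have hc' : edgeExp (Gs.map Prod.fst) c' = 0 := by
      by_contra h
      exact hglue (exists_mem_of_edgeExp_apply_ne_zero h)
    exact hE.cons_discard he he' hg hc' hGs hcard hA

end Step

lemma satisfiesBanerjee_of_forall_adj {E : Multiset (V × V)} (hE : ∀ p ∈ E, G.Adj p.1 p.2) :
    SatisfiesBanerjee G E := by
  induction E using Multiset.induction with
  | empty => exact satisfiesBanerjee_zero
  | cons e E ih =>
    rw [Multiset.forall_mem_cons] at hE
    exact (ih hE.2).cons hE.1

end Banerjee

section Colon

variable {V : Type*} {G : SimpleGraph V}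

theorem exists_degree_le_two_of_add_mem_edgePowExps {E : Multiset (V × V)}
    (hE : ∀ p ∈ E, G.Adj p.1 p.2) {D a : V →₀ ℕ} (hED : edgeExp E ≤ D)
    (h : a + D ∈ edgePowExps G (E.card + 1)) :
    ∃ d ≤ a, d.degree ≤ 2 ∧ d + D ∈ edgePowExps G (E.card + 1) := by
  obtain ⟨L, hL, hLcard, hLle⟩ := h
  have hGs : ∀ gC ∈ L.map (·, (0 : Multiset (V × V))), IsEvenConnected G gC.1 gC.2 := by
    simp only [Multiset.forall_mem_map_iff]
    intro p hp
    simpa [IsEvenConnected, edgeExp] using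
      edgeExp_mem_edgePowExps (G := G) (L := {p}) (by simpa using hL p hp)
  have hA : edgeExp ((L.map (·, (0 : Multiset (V × V)))).map Prod.fst) ≤
      a + (D - edgeExp E) + edgeExp E := by
    rwa [Multiset.map_map, Function.comp_def, Multiset.map_id', add_assoc,
      tsub_add_cancel_of_le hED]
  obtain ⟨F', hF', hdeg, hmem⟩ :=
    satisfiesBanerjee_of_forall_adj hE _ _ hGs (by simp [hLcard]) hA
  refine ⟨F' - (D - edgeExp E), tsub_le_iff_right.mpr hF', (degree_mono tsub_le_self).trans hdeg,
    mem_edgePowExps_of_le (by simpa [Multiset.bind_map] using hmem) fun x => ?_⟩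
  have := hED x
  simp only [Finsupp.add_apply, Finsupp.tsub_apply]
  omega

variable (k : Type*) [Field k]

theorem exists_minimal_generators_colon_edgeIdeal_pow {E : Multiset (V × V)}
    (hE : ∀ p ∈ E, G.Adj p.1 p.2) {s : ℕ} (hs : E.card + 1 = s) {D : V →₀ ℕ}
    (hED : edgeExp E ≤ D) :
    ∃ S : Set (MvPolynomial V k),
      (∀ f ∈ S, ∃ d : V →₀ ℕ, f = monomial d 1 ∧ d.degree ≤ 2) ∧
      Submodule.colon (edgeIdeal k G ^ s) (Ideal.span {monomial D (1 : k)}) = Ideal.span S ∧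
      ∀ f ∈ S, f ∉ Ideal.span (S \ {f}) := by
  subst hs
  refine ⟨_, ?_, colon_span_monomial_eq_span_minimal _ _ (fun f => mem_edgeIdeal_pow_iff k) D, ?_⟩
  · rintro _ ⟨d, hd, rfl⟩
    have hd : Minimal (fun d => d + D ∈ edgePowExps G (E.card + 1)) d := hd
    obtain ⟨d', hd'd, hdeg, hd'⟩ := exists_degree_le_two_of_add_mem_edgePowExps hE hED hd.1
    exact ⟨d, rfl, hd.eq_of_le hd' hd'd ▸ hdeg⟩
  · rintro _ ⟨d, hd, rfl⟩
    exact monomial_notMem_span_minimal_diff hd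

end Colon

lemma Finset.sum_range_two_mul {M : Type*} [AddCommMonoid M] (f : ℕ → M) (l : ℕ) :
    ∑ i ∈ Finset.range (2 * l), f i = ∑ j ∈ Finset.range l, (f (2 * j) + f (2 * j + 1)) := by
  induction l with
  | zero => simp
  | succ l ih =>
    rw [show 2 * (l + 1) = 2 * l + 1 + 1 by ring, Finset.sum_range_succ, Finset.sum_range_succ, ih,
      Finset.sum_range_succ, add_assoc]

lemma ZMod.sum_univ_eq_sum_range {M : Type*} [AddCommMonoid M] {n : ℕ} (g : ZMod (n + 1) → M) :
    ∑ i, g i = ∑ i ∈ Finset.range (n + 1), g i :=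
  calc ∑ i, g i = ∑ i : ZMod (n + 1), g (i.val : ZMod (n + 1)) := by
        simp only [ZMod.natCast_zmod_val]
    _ = _ := Fin.sum_univ_eq_sum_range (fun i => g i) _

section OddCycle

variable {V : Type*} {l : ℕ}

def oddCycleMatching (l : ℕ) (c : ZMod (2 * l + 1) → V) : Multiset (V × V) :=
  (Multiset.range l).map fun j => (c (2 * j : ℕ), c (2 * j + 1 : ℕ))

lemma card_oddCycleMatching (c : ZMod (2 * l + 1) → V) : (oddCycleMatching l c).card = l := by
  simp [oddCycleMatching]

lemma adj_of_mem_oddCycleMatching {G : SimpleGraph V} {c : ZMod (2 * l + 1) → V}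
    (hc : ∀ i, G.Adj (c i) (c (i + 1))) : ∀ p ∈ oddCycleMatching l c, G.Adj p.1 p.2 := by
  simp only [oddCycleMatching, Multiset.forall_mem_map_iff]
  intro j _
  simpa using hc (2 * j : ℕ)

lemma edgeExp_oddCycleMatching_le (c : ZMod (2 * l + 1) → V) :
    edgeExp (oddCycleMatching l c) ≤ ∑ i, single (c i) 1 :=
  calc edgeExp (oddCycleMatching l c)
      = ∑ i ∈ Finset.range (2 * l), single (c i) 1 := by
        rw [Finset.sum_range_two_mul, edgeExp, oddCycleMatching, Multiset.map_map]
        rfl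
    _ ≤ ∑ i ∈ Finset.range (2 * l + 1), single (c i) 1 :=
        Finset.sum_le_sum_of_subset (Finset.range_subset_range.mpr (by omega))
    _ = ∑ i, single (c i) 1 :=
        (ZMod.sum_univ_eq_sum_range (n := 2 * l) fun i => single (c i) 1).symm

end OddCycle

theorem stmt14_general (k : Type*) [Field k] {V : Type*} (G : SimpleGraph V)
    (m n : ℕ)
    (c₁ : ZMod (2 * m + 1) → V) (c₂ : ZMod (2 * n + 1) → V)
    (hbow : IsBow G c₁ c₂)
    (s : ℕ) (hs : m + n + 1 < s)
    (u : MvPolynomial V k) (hu : ∃ d : V →₀ ℕ, u = monomial d 1)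
    (humem : u ∈ edgeIdeal k G ^ (s - (m + n + 1))) :
    ∃ S : Set (MvPolynomial V k),
      (∀ f ∈ S, ∃ d : V →₀ ℕ, f = monomial d 1 ∧ (d.sum fun _ e => e) ≤ 2) ∧
      Submodule.colon (edgeIdeal k G ^ s)
        (Ideal.span {((∏ i : ZMod (2 * m + 1), X (c₁ i)) *
            ∏ j : ZMod (2 * n + 1), X (c₂ j) : MvPolynomial V k) * u}) = Ideal.span S ∧
      (∀ f ∈ S, f ∉ Ideal.span (S \ {f})) := by
  obtain ⟨⟨-, hc₁⟩, ⟨-, hc₂⟩, -, -⟩ := hbow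
  obtain ⟨du, rfl⟩ := hu
  obtain ⟨Lu, hLu, hLu_card, hLu_le⟩ := (monomial_mem_edgeIdeal_pow_iff k).mp humem
  rw [prod_X_eq_monomial, prod_X_eq_monomial, monomial_mul, monomial_mul, one_mul, one_mul]
  refine exists_minimal_generators_colon_edgeIdeal_pow k
    (E := oddCycleMatching m c₁ + oddCycleMatching n c₂ + Lu) ?_ ?_ ?_
  · simp only [Multiset.mem_add, or_imp, forall_and]
    exact ⟨⟨adj_of_mem_oddCycleMatching hc₁, adj_of_mem_oddCycleMatching hc₂⟩, hLu⟩
  · simp only [Multiset.card_add, card_oddCycleMatching, hLu_card]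
    omega
  · simpa using add_le_add (add_le_add (edgeExp_oddCycleMatching_le c₁)
      (edgeExp_oddCycleMatching_le c₂)) hLu_le

/-- For an odd bicyclic graph with unique bow `B` of size `m+n+1`, `s > m+n+1`
and a minimal monomial generator `u` of `I(G)^{s-m-n-1}` with `m_B·u ∉ I(G)ˢ`, the colon ideal
`I(G)ˢ : (m_B u)` is minimally generated by monomials of degree at most two. -/
theorem stmt14 (k : Type*) [Field k] {V : Type*} (G : SimpleGraph V)
    (m n : ℕ)
    (c₁ : ZMod (2 * m + 1) → V) (c₂ : ZMod (2 * n + 1) → V)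
    (hbow : IsBow G c₁ c₂)
    (hbicyclic : ∀ (l : ℕ) (d : ZMod (2 * l + 1) → V), IsCycleMap G (2 * l + 1) d →
      Set.range d = Set.range c₁ ∨ Set.range d = Set.range c₂)
    (s : ℕ) (hs : m + n + 1 < s)
    (u : MvPolynomial V k) (hu : ∃ d : V →₀ ℕ, u = monomial d 1)
    (humem : u ∈ edgeIdeal k G ^ (s - (m + n + 1)))
    (humin : ∀ v : MvPolynomial V k, (∃ d : V →₀ ℕ, v = monomial d 1) →
      v ∈ edgeIdeal k G ^ (s - (m + n + 1)) → v ∣ u → v = u)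
    (hnot : ((∏ i : ZMod (2 * m + 1), X (c₁ i)) *
        ∏ j : ZMod (2 * n + 1), X (c₂ j) : MvPolynomial V k) * u ∉ edgeIdeal k G ^ s) :
    ∃ S : Set (MvPolynomial V k),
      (∀ f ∈ S, ∃ d : V →₀ ℕ, f = monomial d 1 ∧ (d.sum fun _ e => e) ≤ 2) ∧
      Submodule.colon (edgeIdeal k G ^ s)
        (Ideal.span {((∏ i : ZMod (2 * m + 1), X (c₁ i)) *
            ∏ j : ZMod (2 * n + 1), X (c₂ j) : MvPolynomial V k) * u}) = Ideal.span S ∧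
      (∀ f ∈ S, f ∉ Ideal.span (S \ {f})) :=
  stmt14_general k G m n c₁ c₂ hbow s hs u hu humem
end
end
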